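/- If $k_1$ and $k_2$ are both increasing functions on $[-1,1]$, then their spherical convolution $k_1 * k_2$, defined by $(k_1 * k_2)(t) = \int_{S^n} k_1(x\cdot y) k_2(y\cdot z)\, d\mu(y)$ for any $x,z \in S^n$ with $x\cdot z = t$, is also an increasing function on $[-1,1]$. -/

import Mathlib

/-!
For `z, z'` of equal norm, the reflection `σ` in the hyperplane orthogonal to `z - z'` swaps them,
so by rotation invariance of the measure `2 (kernelConv μ k₁ k₂ x z' - kernelConv μ k₁ k₂ x z)`
equals `∫ (k₁ ⟪x, y⟫ - k₁ ⟪σ x, y⟫) (k₂ ⟪y, z'⟫ - k₂ ⟪y, z⟫) dμ(y)`. When `⟪x, z⟫ ≤ ⟪x, z'⟫` both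
factors have the sign of `⟪z' - z, y⟫`, so the integrand is nonnegative. A general pair `(x', z')`
is first moved to `(x, R z')` by a reflection `R` with `R x' = x`. The integrals over the sphere
`Sⁿ` are finite because `μH[n] Sⁿ < ∞`: `Sⁿ` is covered by `2 (n + 1)` graphs of Lipschitz
functions over a compact ball of `ℝⁿ`.
-/

open MeasureTheory Metric Set
open scoped RealInnerProductSpace ENNReal Pointwise

noncomputable section

lemma Monotone.mul_sub_nonneg_of_sub_eq_mul {f g : ℝ → ℝ} (hf : Monotone f) (hg : Monotone g)
    {c s t u v : ℝ} (hc : 0 ≤ c) (h : s - t = c * (u - v)) :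
    0 ≤ (f s - f t) * (g u - g v) := by
  rcases le_total u v with huv | hvu
  · have hst : s ≤ t := by nlinarith
    exact mul_nonneg_of_nonpos_of_nonpos (sub_nonpos.2 (hf hst)) (sub_nonpos.2 (hg huv))
  · have hts : t ≤ s := by nlinarith
    exact mul_nonneg (sub_nonneg.2 (hf hts)) (sub_nonneg.2 (hg hvu))

lemma Monotone.abs_le_max_of_abs_le {k : ℝ → ℝ} (hk : Monotone k) {c t : ℝ} (ht : |t| ≤ c) :
    |k t| ≤ max |k (-c)| |k c| :=
  abs_le_max_abs_abs (hk (abs_le.1 ht).1) (hk (abs_le.1 ht).2)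

lemma real_inner_reflection_orthogonal_singleton_left {E : Type*} [NormedAddCommGroup E]
    [InnerProductSpace ℝ E] (w x y : E) :
    ⟪(ℝ ∙ w)ᗮ.reflection x, y⟫ = ⟪x, y⟫ - 2 * (⟪w, x⟫ / ‖w‖ ^ 2) * ⟪w, y⟫ := by
  rw [Submodule.reflection_orthogonal_apply, Submodule.reflection_singleton_apply]
  simp only [RCLike.ofReal_real_eq_id, id_eq, inner_neg_left, inner_sub_left, two_smul,
    inner_add_left, real_inner_smul_left]
  ring

section KernelConv

variable {E : Type*} [NormedAddCommGroup E] [InnerProductSpace ℝ E] [MeasurableSpace E]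
  [BorelSpace E]

def kernelConv (μ : Measure E) (k₁ k₂ : ℝ → ℝ) (x z : E) : ℝ :=
  ∫ y, k₁ ⟪x, y⟫ * k₂ ⟪y, z⟫ ∂μ

variable {μ : Measure E} {k₁ k₂ : ℝ → ℝ}

lemma kernelConv_map_map {R : E ≃ₗᵢ[ℝ] E} (hR : MeasurePreserving R μ μ) (x z : E) :
    kernelConv μ k₁ k₂ (R x) (R z) = kernelConv μ k₁ k₂ x z := by
  rw [kernelConv, ← hR.integral_comp R.toHomeomorph.measurableEmbedding]
  simp only [LinearIsometryEquiv.inner_map_map, kernelConv]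

lemma kernelConv_le_of_inner_le_right (hμ : ∀ R : E ≃ₗᵢ[ℝ] E, MeasurePreserving R μ μ)
    (h₁ : Monotone k₁) (h₂ : Monotone k₂)
    (hint : ∀ a b : E, Integrable (fun y => k₁ ⟪a, y⟫ * k₂ ⟪y, b⟫) μ)
    {x z z' : E} (hzz' : ‖z‖ = ‖z'‖) (h : ⟪x, z⟫ ≤ ⟪x, z'⟫) :
    kernelConv μ k₁ k₂ x z ≤ kernelConv μ k₁ k₂ x z' := by
  obtain rfl | hne := eq_or_ne z z'
  · rfl
  set w := z - z' with hw_def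
  set σ := (ℝ ∙ w)ᗮ.reflection
  have hσz : σ z = z' := Submodule.reflection_sub hzz'
  have hσz' : σ z' = z := by rw [← hσz, Submodule.reflection_reflection]
  have hswap : kernelConv μ k₁ k₂ (σ x) z' = kernelConv μ k₁ k₂ x z := by
    rw [← hσz, kernelConv_map_map (hμ σ)]
  have hswap' : kernelConv μ k₁ k₂ (σ x) z = kernelConv μ k₁ k₂ x z' := by
    rw [← hσz', kernelConv_map_map (hμ σ)]
  have hw : 0 < ‖w‖ ^ 2 := pow_pos (norm_pos_iff.2 (sub_ne_zero.2 hne)) 2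
  have hwx : ⟪w, x⟫ ≤ 0 := by
    rw [inner_sub_left, real_inner_comm x z, real_inner_comm x z']
    linarith
  have hpointwise : ∀ y, 0 ≤ (k₁ ⟪x, y⟫ - k₁ ⟪σ x, y⟫) * (k₂ ⟪y, z'⟫ - k₂ ⟪y, z⟫) := fun y =>
    h₁.mul_sub_nonneg_of_sub_eq_mul h₂ (c := -2 * (⟪w, x⟫ / ‖w‖ ^ 2))
      (mul_nonneg_of_nonpos_of_nonpos (by norm_num) (div_nonpos_of_nonpos_of_nonneg hwx hw.le))
      (by rw [real_inner_reflection_orthogonal_singleton_left, hw_def, inner_sub_left z z' y,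
        real_inner_comm z y, real_inner_comm z' y]; ring)
  have hsplit : ∫ y, (k₁ ⟪x, y⟫ - k₁ ⟪σ x, y⟫) * (k₂ ⟪y, z'⟫ - k₂ ⟪y, z⟫) ∂μ =
      (kernelConv μ k₁ k₂ x z' - kernelConv μ k₁ k₂ (σ x) z') -
        (kernelConv μ k₁ k₂ x z - kernelConv μ k₁ k₂ (σ x) z) := by
    simp only [sub_mul, mul_sub]
    rw [integral_sub, integral_sub (hint _ _) (hint _ _), integral_sub (hint _ _) (hint _ _)]
    · rfl
    all_goals exact (hint _ _).sub (hint _ _)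
  have hnonneg : 0 ≤ ∫ y, (k₁ ⟪x, y⟫ - k₁ ⟪σ x, y⟫) * (k₂ ⟪y, z'⟫ - k₂ ⟪y, z⟫) ∂μ :=
    integral_nonneg hpointwise
  rw [hsplit, hswap, hswap'] at hnonneg
  linarith

lemma kernelConv_le_of_inner_le (hμ : ∀ R : E ≃ₗᵢ[ℝ] E, MeasurePreserving R μ μ)
    (h₁ : Monotone k₁) (h₂ : Monotone k₂)
    (hint : ∀ a b : E, Integrable (fun y => k₁ ⟪a, y⟫ * k₂ ⟪y, b⟫) μ)
    {x z x' z' : E} (hx : ‖x‖ = ‖x'‖) (hz : ‖z‖ = ‖z'‖) (h : ⟪x, z⟫ ≤ ⟪x', z'⟫) :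
    kernelConv μ k₁ k₂ x z ≤ kernelConv μ k₁ k₂ x' z' := by
  set R := (ℝ ∙ (x' - x))ᗮ.reflection
  have hRx : R x' = x := Submodule.reflection_sub hx.symm
  rw [← kernelConv_map_map (hμ R) x' z', hRx]
  rw [← R.inner_map_map x' z', hRx] at h
  exact kernelConv_le_of_inner_le_right hμ h₁ h₂ hint (by rw [hz, R.norm_map]) h

lemma Monotone.integrableOn_mul_comp_inner (h₁ : Monotone k₁) (h₂ : Monotone k₂) {s : Set E}
    (hs : MeasurableSet s) (hsb : Bornology.IsBounded s) (hμs : μ s ≠ ∞) (a b : E) :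
    IntegrableOn (fun y => k₁ ⟪a, y⟫ * k₂ ⟪y, b⟫) s μ := by
  obtain ⟨r, hr⟩ := hsb.subset_closedBall 0
  have hmeas : Measurable fun y => k₁ ⟪a, y⟫ * k₂ ⟪y, b⟫ :=
    (h₁.measurable.comp (by fun_prop)).mul (h₂.measurable.comp (by fun_prop))
  refine Measure.integrableOn_of_bounded hμs hmeas.aestronglyMeasurable
    (M := max |k₁ (-(‖a‖ * r))| |k₁ (‖a‖ * r)| * max |k₂ (-(r * ‖b‖))| |k₂ (r * ‖b‖)|)
    ((ae_restrict_iff' hs).2 (ae_of_all _ fun y hy => ?_))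
  have hy : ‖y‖ ≤ r := mem_closedBall_zero_iff.1 (hr hy)
  have ha := h₁.abs_le_max_of_abs_le (c := ‖a‖ * r)
    ((abs_real_inner_le_norm a y).trans (by gcongr))
  have hb := h₂.abs_le_max_of_abs_le (c := r * ‖b‖)
    ((abs_real_inner_le_norm y b).trans (by gcongr))
  rw [Real.norm_eq_abs, abs_mul]
  exact mul_le_mul ha hb (abs_nonneg _) ((abs_nonneg _).trans ha)

lemma kernelConv_restrict_sphere_congr {ν : Measure E} {k₁' k₂' : ℝ → ℝ}
    (h₁ : EqOn k₁ k₁' (Icc (-1) 1)) (h₂ : EqOn k₂ k₂' (Icc (-1) 1)) {x z : E}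
    (hx : ‖x‖ = 1) (hz : ‖z‖ = 1) :
    kernelConv (ν.restrict (sphere 0 1)) k₁ k₂ x z =
      kernelConv (ν.restrict (sphere 0 1)) k₁' k₂' x z :=
  setIntegral_congr_fun isClosed_sphere.measurableSet fun y hy => by
    have hy : ‖y‖ = 1 := mem_sphere_zero_iff_norm.1 hy
    rw [h₁ (real_inner_mem_Icc_of_norm_eq_one hx hy), h₂ (real_inner_mem_Icc_of_norm_eq_one hy hz)]

lemma measurePreserving_restrict_sphere (d r : ℝ) (R : E ≃ₗᵢ[ℝ] E) :
    MeasurePreserving R (μH[d].restrict (sphere 0 r)) (μH[d].restrict (sphere 0 r)) := by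
  have h : MeasurePreserving R μH[d] μH[d] :=
    ⟨R.continuous.measurable, R.toIsometryEquiv.map_hausdorffMeasure d⟩
  simpa using h.restrict_preimage (s := sphere 0 r) isClosed_sphere.measurableSet

end KernelConv

def sphereGraph {n : ℕ} (i : Fin (n + 1)) (v : EuclideanSpace ℝ (Fin n)) :
    EuclideanSpace ℝ (Fin (n + 1)) :=
  WithLp.toLp 2 (Fin.insertNth i (√(1 - ‖v‖ ^ 2)) v.ofLp)

lemma contDiffOn_sphereGraph {n : ℕ} (i : Fin (n + 1)) :
    ContDiffOn ℝ 1 (sphereGraph i) (ball 0 1) := by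
  refine contDiffOn_piLp' _ fun j => ?_
  induction j using Fin.succAboveCases i with
  | x =>
    simp only [sphereGraph, PiLp.toLp_apply, Fin.insertNth_apply_same]
    refine (contDiff_const.sub (contDiff_norm_sq ℝ)).contDiffOn.sqrt fun v hv => ?_
    have : ‖v‖ < 1 := mem_ball_zero_iff.1 hv
    nlinarith [norm_nonneg v]
  | p k =>
    simp only [sphereGraph, PiLp.toLp_apply, Fin.insertNth_apply_succAbove]
    fun_prop

lemma EuclideanSpace.norm_sq_toLp_removeNth {n : ℕ} (i : Fin (n + 1))
    (y : EuclideanSpace ℝ (Fin (n + 1))) :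
    ‖(WithLp.toLp 2 (Fin.removeNth i y.ofLp) : EuclideanSpace ℝ (Fin n))‖ ^ 2 =
      ‖y‖ ^ 2 - y i ^ 2 := by
  simp only [EuclideanSpace.norm_sq_eq, Fin.sum_univ_succAbove _ i, Real.norm_eq_abs, sq_abs]
  simp [Fin.removeNth]

lemma sphereGraph_toLp_removeNth {n : ℕ} {i : Fin (n + 1)} {y : EuclideanSpace ℝ (Fin (n + 1))}
    (hy : ‖y‖ = 1) (hyi : 0 ≤ y i) :
    sphereGraph i (WithLp.toLp 2 (Fin.removeNth i y.ofLp)) = y := by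
  rw [sphereGraph, EuclideanSpace.norm_sq_toLp_removeNth, hy, one_pow, sub_sub_cancel,
    Real.sqrt_sq hyi]
  exact congrArg (WithLp.toLp 2) (Fin.insertNth_self_removeNth i y.ofLp)

lemma sphere_subset_iUnion_sphereGraph (n : ℕ) :
    sphere (0 : EuclideanSpace ℝ (Fin (n + 1))) 1 ⊆
      ⋃ i, (sphereGraph i '' closedBall 0 √(n / (n + 1)) ∪
        -(sphereGraph i '' closedBall 0 √(n / (n + 1)))) := by
  intro y hy
  have hy1 : ‖y‖ = 1 := mem_sphere_zero_iff_norm.1 hy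
  obtain ⟨i, -, hi⟩ : ∃ i ∈ Finset.univ, 1 / ((n : ℝ) + 1) ≤ y i ^ 2 := by
    refine Finset.exists_le_of_sum_le Finset.univ_nonempty ?_
    simp only [Finset.sum_const, Finset.card_univ, Fintype.card_fin, nsmul_eq_mul]
    rw [← EuclideanSpace.real_norm_sq_eq, hy1]
    push_cast
    field_simp
    rfl
  have hmem : ∀ y' : EuclideanSpace ℝ (Fin (n + 1)), ‖y'‖ = 1 → 1 / ((n : ℝ) + 1) ≤ y' i ^ 2 →
      0 ≤ y' i → y' ∈ sphereGraph i '' closedBall 0 √(n / (n + 1)) := by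
    intro y' hy' hi' hpos
    refine ⟨_, ?_, sphereGraph_toLp_removeNth hy' hpos⟩
    rw [mem_closedBall_zero_iff, Real.le_sqrt (norm_nonneg _) (by positivity),
      EuclideanSpace.norm_sq_toLp_removeNth, hy']
    have : (n : ℝ) / (n + 1) = 1 - 1 / (n + 1) := by field_simp; ring
    linarith
  refine mem_iUnion.2 ⟨i, ?_⟩
  rcases le_total 0 (y i) with hpos | hneg
  · exact Or.inl (hmem y hy1 hi hpos)
  · exact Or.inr (hmem (-y) (by rwa [norm_neg]) (by simpa using hi) (by simpa using hneg))

lemma hausdorffMeasure_sphere_lt_top (n : ℕ) :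
    μH[n] (sphere (0 : EuclideanSpace ℝ (Fin (n + 1))) 1) < ∞ := by
  set B := closedBall (0 : EuclideanSpace ℝ (Fin n)) √(n / (n + 1))
  have hB : μH[n] B < ∞ := by
    have := (isCompact_closedBall (0 : EuclideanSpace ℝ (Fin n)) √(n / (n + 1))).measure_lt_top
      (μ := μH[Module.finrank ℝ (EuclideanSpace ℝ (Fin n))])
    rwa [finrank_euclideanSpace_fin] at this
  have hB1 : B ⊆ ball 0 1 := closedBall_subset_ball <| by
    rw [Real.sqrt_lt' one_pos, one_pow, div_lt_one (by positivity)]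
    linarith
  have hgraph : ∀ i : Fin (n + 1), μH[n] (sphereGraph i '' B) < ∞ := fun i => by
    obtain ⟨K, hK⟩ := ((contDiffOn_sphereGraph i).mono hB1).exists_lipschitzOnWith one_ne_zero
      (convex_closedBall _ _) (isCompact_closedBall _ _)
    exact (hK.hausdorffMeasure_image_le (Nat.cast_nonneg n)).trans_lt
      (ENNReal.mul_lt_top (by finiteness) hB)
  refine (measure_mono (sphere_subset_iUnion_sphereGraph n)).trans_lt
    ((measure_iUnion_fintype_le _ _).trans_lt (ENNReal.sum_lt_top.2 fun i _ => ?_))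
  refine (measure_union_le _ _).trans_lt (ENNReal.add_lt_top.2 ⟨hgraph i, ?_⟩)
  exact ((IsometryEquiv.neg _).hausdorffMeasure_preimage _ _).trans_lt (hgraph i)

theorem stmt_0 (n : ℕ) (k₁ k₂ : ℝ → ℝ)
    (h₁ : MonotoneOn k₁ (Icc (-1 : ℝ) 1)) (h₂ : MonotoneOn k₂ (Icc (-1 : ℝ) 1))
    (x z x' z' : EuclideanSpace ℝ (Fin (n + 1)))
    (hx : x ∈ sphere (0 : EuclideanSpace ℝ (Fin (n + 1))) 1)
    (hz : z ∈ sphere (0 : EuclideanSpace ℝ (Fin (n + 1))) 1)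
    (hx' : x' ∈ sphere (0 : EuclideanSpace ℝ (Fin (n + 1))) 1)
    (hz' : z' ∈ sphere (0 : EuclideanSpace ℝ (Fin (n + 1))) 1)
    (ht : ⟪x, z⟫ ≤ ⟪x', z'⟫) :
    (∫ y in sphere (0 : EuclideanSpace ℝ (Fin (n + 1))) 1,
        k₁ ⟪x, y⟫ * k₂ ⟪y, z⟫ ∂μH[(n : ℝ)]) ≤
      ∫ y in sphere (0 : EuclideanSpace ℝ (Fin (n + 1))) 1,
        k₁ ⟪x', y⟫ * k₂ ⟪y, z'⟫ ∂μH[(n : ℝ)] := by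
  rw [mem_sphere_zero_iff_norm] at hx hz hx' hz'
  have h : (-1 : ℝ) ≤ 1 := by norm_num
  set K₁ := IccExtend h fun t : Icc (-1 : ℝ) 1 => k₁ t
  set K₂ := IccExtend h fun t : Icc (-1 : ℝ) 1 => k₂ t
  have hK₁ : Monotone K₁ := (monotoneOn_iff_monotone.1 h₁).IccExtend h
  have hK₂ : Monotone K₂ := (monotoneOn_iff_monotone.1 h₂).IccExtend h
  have hk₁ : EqOn k₁ K₁ (Icc (-1) 1) := fun _ ht => (IccExtend_of_mem h (fun t => k₁ t) ht).symm
  have hk₂ : EqOn k₂ K₂ (Icc (-1) 1) := fun _ ht => (IccExtend_of_mem h (fun t => k₂ t) ht).symm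
  change kernelConv _ k₁ k₂ x z ≤ kernelConv _ k₁ k₂ x' z'
  rw [kernelConv_restrict_sphere_congr hk₁ hk₂ hx hz,
    kernelConv_restrict_sphere_congr hk₁ hk₂ hx' hz']
  exact kernelConv_le_of_inner_le (measurePreserving_restrict_sphere _ _) hK₁ hK₂
    (fun a b => hK₁.integrableOn_mul_comp_inner hK₂ isClosed_sphere.measurableSet isBounded_sphere
      (hausdorffMeasure_sphere_lt_top n).ne a b)
    (hx.trans hx'.symm) (hz.trans hz'.symm) ht
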